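/- arXiv:2405.03878 — 2 statements merged into one kernel-verified Lean document; each statement's English description precedes it below -/
import Mathlib

section
/- In an acyclic episodic trajectory with tabular values, the total update accumulated by the online eligibility-trace algorithm (Chunked-TD) for state s_t equals the offline λ-return update: Σ over all steps k ≥ t of α · δ_k · e_k(s_t) = α (G_t^λ - V̂(s_t)), where the trace for s_t is initialized to 1 at step t, multiplied by γ P̂^π(x_{i+1}|x_i) at each subsequent step i, and λ_{i} = P̂^π(x_{i+1}|x_i). Equivalently, both equal α Σ_{k=t}^{T-1} γ^{k-t} δ_k Π_{i=t+1}^{k} P̂^π(x_{i+1}|x_i). -/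
/-- Chunked-TD equivalence: the total online eligibility-trace update for state
s_t equals the offline λ-return update with λ_i = P̂^π(x_{i+1}|x_i) = p_i, and
both equal α Σ_{k=t}^{T-1} γ^{k-t} δ_k Π_{i=t+1}^k p_i. -/
theorem chunked_td_online_offline_equivalence
    (T t : ℕ) (ht : t < T)
    (r V G p e : ℕ → ℝ) (γ α : ℝ)
    (hp : ∀ i, 0 ≤ p i ∧ p i ≤ 1)
    (he : ∀ k, t ≤ k → e k = γ ^ (k - t) * ∏ i ∈ Finset.Ico (t + 1) (k + 1), p i)
    (hbase : G (T - 1) = r T + γ * V T)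
    (hrec : ∀ k, t ≤ k → k + 1 < T →
      G k = r (k + 1) + γ * p (k + 1) * G (k + 1) + (1 - p (k + 1)) * γ * V (k + 1)) :
    (∑ k ∈ Finset.Ico t T,
        α * (r (k + 1) + γ * V (k + 1) - V k) * e k) = α * (G t - V t) ∧
    α * (G t - V t) =
      α * ∑ k ∈ Finset.Ico t T,
        γ ^ (k - t) * (r (k + 1) + γ * V (k + 1) - V k) *
          ∏ i ∈ Finset.Ico (t + 1) (k + 1), p i := by
  have key : ∀ n m, t ≤ m → m < T → T - m ≤ n →
      G m - V m = ∑ k ∈ Finset.Ico m T,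
        γ ^ (k - m) * (r (k + 1) + γ * V (k + 1) - V k) *
          ∏ i ∈ Finset.Ico (m + 1) (k + 1), p i := by
    intro n
    induction n with
    | zero => intro m htm hmT h; omega
    | succ n ih =>
      intro m htm hmT h
      by_cases hlast : m + 1 = T
      · have hm : m = T - 1 := by omega
        rw [Finset.sum_eq_sum_Ico_succ_bot hmT]
        rw [show Finset.Ico (m + 1) T = ∅ by rw [hlast]; simp]
        simp only [Finset.sum_empty, add_zero, Nat.sub_self, pow_zero, one_mul]
        rw [show Finset.Ico (m + 1) (m + 1) = ∅ by simp, Finset.prod_empty, mul_one]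
        have hb : G m = r (m + 1) + γ * V (m + 1) := by
          rw [hm, show T - 1 + 1 = T by omega]; exact hbase
        rw [hb]
      · have hm1 : m + 1 < T := by omega
        rw [Finset.sum_eq_sum_Ico_succ_bot hmT]
        have hrw : ∀ k ∈ Finset.Ico (m + 1) T,
            γ ^ (k - m) * (r (k + 1) + γ * V (k + 1) - V k) *
              ∏ i ∈ Finset.Ico (m + 1) (k + 1), p i
            = (γ * p (m + 1)) * (γ ^ (k - (m + 1)) * (r (k + 1) + γ * V (k + 1) - V k) *
              ∏ i ∈ Finset.Ico (m + 1 + 1) (k + 1), p i) := by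
          intro k hk
          rw [Finset.mem_Ico] at hk
          rw [Finset.prod_eq_prod_Ico_succ_bot (by omega : m + 1 < k + 1)]
          rw [show k - m = (k - (m + 1)) + 1 by omega, pow_succ]
          ring
        rw [Finset.sum_congr rfl hrw, ← Finset.mul_sum,
          ← ih (m + 1) (by omega) hm1 (by omega)]
        rw [Nat.sub_self, pow_zero, one_mul,
          show Finset.Ico (m + 1) (m + 1) = ∅ by simp, Finset.prod_empty, mul_one]
        rw [hrec m htm hm1]
        ring
  have hG := key (T - t) t le_rfl ht le_rfl
  constructor
  · rw [hG, Finset.mul_sum]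
    apply Finset.sum_congr rfl
    intro k hk
    rw [Finset.mem_Ico] at hk
    rw [he k hk.1]
    ring
  · rw [hG]
end

section
/- For the TD(1/n) algorithm, the update of V̂(s_t) by the end of an episode in an acyclic MDP equals (1/n(s_t))(G_t^λ - V̂(s_t)) where G_t^λ is the λ-return with state-count-dependent λ_k = 1/n(s_k); that is, the accumulated online update Σ_{k=t}^{T-1} δ_k Π_{i=t}^{k} λ_i equals λ_t(G_t^λ - V̂(s_t)) with G_t^λ satisfying G_t^λ = r_{t+1} + (1/n(s_{t+1})) G_{t+1}^λ + (1 - 1/n(s_{t+1})) V̂(s_{t+1}). -/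
lemma td_one_over_n_aux
    (T : ℕ) (r V G : ℕ → ℝ) (n : ℕ → ℕ)
    (hbase : G (T - 1) = r T + V T) :
    ∀ d t, t + d + 1 = T →
      (∀ k, t ≤ k → k + 1 < T →
        G k = r (k + 1) + (1 / (n (k + 1) : ℝ)) * G (k + 1) +
          (1 - 1 / (n (k + 1) : ℝ)) * V (k + 1)) →
      (∑ k ∈ Finset.Ico t T,
          (r (k + 1) + V (k + 1) - V k) * ∏ i ∈ Finset.Icc t k, (1 / (n i : ℝ)))
        = (1 / (n t : ℝ)) * (G t - V t) := by
  intro d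
  induction d with
  | zero =>
    intro t hT _
    subst hT
    have hst : Finset.Ico t (t + 0 + 1) = {t} := by
      rw [Nat.add_zero, Nat.Ico_succ_singleton]
    rw [hst, Finset.sum_singleton, Finset.Icc_self, Finset.prod_singleton]
    have : G t = r (t + 1) + V (t + 1) := by simpa using hbase
    rw [this]; ring
  | succ d ih =>
    intro t hT hrec
    have h1 : t < T := by omega
    have h2 : t + 1 < T := by omega
    rw [Finset.sum_eq_sum_Ico_succ_bot h1]
    have hsplit : ∀ k ∈ Finset.Ico (t + 1) T,
        (r (k + 1) + V (k + 1) - V k) * ∏ i ∈ Finset.Icc t k, (1 / (n i : ℝ))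
        = (1 / (n t : ℝ)) * ((r (k + 1) + V (k + 1) - V k) *
            ∏ i ∈ Finset.Icc (t + 1) k, (1 / (n i : ℝ))) := by
      intro k hk
      simp only [Finset.mem_Ico] at hk
      have hprod : ∏ i ∈ Finset.Icc t k, (1 / (n i : ℝ))
          = (1 / (n t : ℝ)) * ∏ i ∈ Finset.Icc (t + 1) k, (1 / (n i : ℝ)) := by
        rw [Finset.Icc_add_one_left_eq_Ioc, ← Finset.Icc_erase_left]
        exact (Finset.mul_prod_erase _ _ (Finset.mem_Icc.mpr ⟨le_refl t, by omega⟩)).symm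
      rw [hprod]; ring
    rw [Finset.sum_congr rfl hsplit, ← Finset.mul_sum,
      ih (t + 1) (by omega) (fun k hk hk2 => hrec k (by omega) hk2),
      Finset.Icc_self, Finset.prod_singleton, hrec t (le_refl t) h2]
    ring

/-- TD(1/n): in an acyclic episode, the accumulated online update for s_t,
Σ_{k=t}^{T-1} δ_k Π_{i=t}^{k} (1/n(s_i)), equals the offline update
(1/n(s_t)) (G_t^λ - V̂(s_t)) where G^λ uses λ_k = 1/n(s_k). -/
theorem td_one_over_n_equivalence
    (T t : ℕ) (ht : t < T)
    (r V G : ℕ → ℝ) (n : ℕ → ℕ)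
    (hn : ∀ k, 1 ≤ n k)
    (hbase : G (T - 1) = r T + V T)
    (hrec : ∀ k, t ≤ k → k + 1 < T →
      G k = r (k + 1) + (1 / (n (k + 1) : ℝ)) * G (k + 1) +
        (1 - 1 / (n (k + 1) : ℝ)) * V (k + 1)) :
    (∑ k ∈ Finset.Ico t T,
        (r (k + 1) + V (k + 1) - V k) * ∏ i ∈ Finset.Icc t k, (1 / (n i : ℝ)))
      = (1 / (n t : ℝ)) * (G t - V t) := by
  exact td_one_over_n_aux T r V G n hbase (T - t - 1) t (by omega) hrec
end
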